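/- Let l be the smallest nonnegative integer with k ≤ C(n+l, l). Then any degree-compatible order ideal of the vanishing ideal of k generic points in n-space consists of all monomials of degree < l together with exactly k − C(n+l−1, l−1) monomials of degree l. -/

import Mathlib

/-!
For generic points the evaluation map from the span of any `r` monomials to `K^k` has the maximal
rank `min r k`. Indeed, an `r × r` minor of the evaluation matrix is the specialization of the
determinant of the generic matrix `(∏ᵢ X_{i,t} ^ mₛ(i))ₛₜ`; in the Leibniz expansion of that
determinant distinct permutations give distinct monomials, so it is nonzero, and algebraic
independence makes the specialization injective. Consequently `dim (I ∩ P_{<i}) = N_{<i} - k`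
(truncated subtraction), where `P_{<i}` is spanned by the `N_{<i}` monomials of degree `< i`, and
the space `W i` of degree-`i` leading forms of `I` has dimension `(N_{<i+1} - k) - (N_{<i} - k)`.
Degree-compatibility then says that `O` has `min (N_{<i+1} - N_{<i}) (k - N_{<i})` monomials of
degree `i`: all of them below `l`, `k - N_{<l}` in degree `l`, and none above.
-/

open MvPolynomial Finset Function Module

theorem Submodule.finrank_map_add_finrank_inf_ker {K M N : Type*} [DivisionRing K]
    [AddCommGroup M] [Module K M] [AddCommGroup N] [Module K N] (f : M →ₗ[K] N)
    (p : Submodule K M) [FiniteDimensional K p] :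
    finrank K (p.map f) + finrank K ↥(p ⊓ LinearMap.ker f) = finrank K p := by
  have h := LinearMap.finrank_range_add_finrank_ker (f ∘ₗ p.subtype)
  rwa [LinearMap.range_comp, Submodule.range_subtype, LinearMap.ker_comp,
    ← Submodule.finrank_map_subtype_eq, Submodule.map_comap_subtype] at h

namespace MvPolynomial

instance {R σ : Type*} [CommSemiring R] (S : Finset (σ →₀ ℕ)) :
    Module.Finite R (restrictSupport R (S : Set (σ →₀ ℕ))) :=
  .of_basis (basisRestrictSupport R _)

theorem finrank_restrictSupport {R σ : Type*} [CommRing R] [StrongRankCondition R]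
    (S : Finset (σ →₀ ℕ)) : finrank R (restrictSupport R (S : Set (σ →₀ ℕ))) = #S := by
  rw [finrank_eq_card_basis (basisRestrictSupport R _)]
  simp only [Finset.coe_sort_coe, Fintype.card_coe]

section GenericDeterminant

variable (R : Type*) [CommRing R] {ι σ : Type*} [Fintype ι] [Fintype σ]

noncomputable def genericMonomialMatrix (m : ι → σ →₀ ℕ) :
    Matrix ι ι (MvPolynomial (σ × ι) R) :=
  Matrix.of fun s t => ∏ i, X (i, t) ^ m s i

variable {R}

theorem prod_genericMonomialMatrix (m : ι → σ →₀ ℕ) (τ : Equiv.Perm ι) :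
    ∏ t, genericMonomialMatrix R m (τ t) t =
      monomial (Finsupp.equivFunOnFinite.symm fun p : σ × ι => m (τ p.2) p.1) 1 := by
  rw [monomial_eq, C_1, one_mul, Finsupp.prod_fintype _ _ fun _ => pow_zero _,
    Fintype.prod_prod_type, Finset.prod_comm]
  simp [genericMonomialMatrix]

theorem det_genericMonomialMatrix_ne_zero [DecidableEq ι] [Nontrivial R] {m : ι → σ →₀ ℕ}
    (hm : Injective m) : (genericMonomialMatrix R m).det ≠ 0 := by
  classical
  set E : Equiv.Perm ι → σ × ι →₀ ℕ :=
    fun τ => Finsupp.equivFunOnFinite.symm fun p => m (τ p.2) p.1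
  have hE : Injective E := fun τ τ' h => Equiv.ext fun t => hm <| Finsupp.ext fun i => by
    simpa [E] using DFunLike.congr_fun h (i, t)
  intro h
  have h1 := congr_arg (coeff (E 1)) h
  rw [Matrix.det_apply] at h1
  simp only [prod_genericMonomialMatrix, coeff_sum, coeff_zero] at h1
  change ∑ τ, coeff (E 1) (Equiv.Perm.sign τ • monomial (E τ) (1 : R)) = 0 at h1
  simp only [Units.smul_def, coeff_smul, coeff_monomial, hE.eq_iff, smul_ite, smul_zero,
    Finset.sum_ite_eq', Finset.mem_univ, if_true] at h1
  simp at h1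

theorem det_monomial_ne_zero [DecidableEq ι] [Nontrivial R] {κ A : Type*} [CommRing A]
    [Algebra R A] {a : σ → κ → A} (ha : AlgebraicIndependent R fun p : σ × κ => a p.1 p.2)
    {m : ι → σ →₀ ℕ} (hm : Injective m) {e : ι → κ} (he : Injective e) :
    (Matrix.of fun s t => ∏ i, a i (e t) ^ m s i).det ≠ 0 := by
  have hae : AlgebraicIndependent R fun p : σ × ι => a p.1 (e p.2) :=
    ha.comp (Prod.map id e) (injective_id.prodMap he)
  have hspec : (Matrix.of fun s t => ∏ i, a i (e t) ^ m s i) =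
      (aeval fun p : σ × ι => a p.1 (e p.2)).mapMatrix (genericMonomialMatrix R m) := by
    ext s t
    simp [genericMonomialMatrix]
  rw [hspec, ← AlgHom.map_det]
  exact (map_ne_zero_iff _ hae).2 (det_genericMonomialMatrix_ne_zero hm)

end GenericDeterminant

section DegreeFiltration

variable (σ : Type*) [Fintype σ] [DecidableEq σ]

def exponentsOfDegree (i : ℕ) : Finset (σ →₀ ℕ) :=
  univ.finsuppAntidiag i

def exponentsOfDegreeLT (i : ℕ) : Finset (σ →₀ ℕ) :=
  (range i).biUnion (exponentsOfDegree σ)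

variable {σ}

theorem mem_exponentsOfDegree {d : σ →₀ ℕ} {i : ℕ} :
    d ∈ exponentsOfDegree σ i ↔ d.degree = i := by
  simp [exponentsOfDegree, Finsupp.degree_eq_sum]

theorem mem_exponentsOfDegreeLT {d : σ →₀ ℕ} {i : ℕ} :
    d ∈ exponentsOfDegreeLT σ i ↔ d.degree < i := by
  simp [exponentsOfDegreeLT, mem_exponentsOfDegree]

theorem card_exponentsOfDegree (i : ℕ) :
    #(exponentsOfDegree σ i) = (Fintype.card σ + i - 1).choose i := by
  rw [exponentsOfDegree, card_finsuppAntidiag_nat_eq_choose, card_univ]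

theorem card_exponentsOfDegreeLT (i : ℕ) :
    #(exponentsOfDegreeLT σ i) = ∑ j ∈ range i, #(exponentsOfDegree σ j) := by
  refine card_biUnion fun j _ j' _ hjj' => disjoint_left.2 fun d hd hd' => hjj' ?_
  rw [mem_exponentsOfDegree] at hd hd'
  rw [← hd, ← hd']

theorem card_exponentsOfDegreeLT_succ (i : ℕ) :
    #(exponentsOfDegreeLT σ (i + 1)) = #(exponentsOfDegreeLT σ i) + #(exponentsOfDegree σ i) := by
  rw [card_exponentsOfDegreeLT, sum_range_succ, card_exponentsOfDegreeLT]

theorem card_exponentsOfDegreeLT_succ_eq_choose (i : ℕ) :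
    #(exponentsOfDegreeLT σ (i + 1)) = (Fintype.card σ + i).choose i := by
  induction i with
  | zero => simp [card_exponentsOfDegreeLT, card_exponentsOfDegree]
  | succ i ih =>
    rw [card_exponentsOfDegreeLT_succ, ih, card_exponentsOfDegree, ← add_assoc,
      add_tsub_cancel_right, Nat.choose_succ_succ]

theorem card_exponentsOfDegreeLT_eq_choose [Nonempty σ] (i : ℕ) :
    #(exponentsOfDegreeLT σ i) = (Fintype.card σ + i - 1).choose (Fintype.card σ) := by
  cases i with
  | zero => simp [exponentsOfDegreeLT, Nat.choose_eq_zero_of_lt, Fintype.card_pos]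
  | succ i => rw [card_exponentsOfDegreeLT_succ_eq_choose, ← add_assoc, add_tsub_cancel_right,
      Nat.choose_symm_add]

theorem card_exponentsOfDegreeLT_mono : Monotone fun i => #(exponentsOfDegreeLT σ i) :=
  fun _ _ hij => card_le_card fun _ hd =>
    mem_exponentsOfDegreeLT.2 ((mem_exponentsOfDegreeLT.1 hd).trans_le hij)

variable (R : Type*) [CommSemiring R]

theorem restrictTotalDegree_eq_restrictSupport_exponentsOfDegreeLT (i : ℕ) :
    restrictTotalDegree σ R i =
      restrictSupport R (exponentsOfDegreeLT σ (i + 1) : Set (σ →₀ ℕ)) := by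
  rw [restrictTotalDegree]
  congr 1
  ext d
  rw [mem_coe, mem_exponentsOfDegreeLT, Nat.lt_succ_iff]
  rfl

theorem homogeneousSubmodule_eq_restrictSupport_exponentsOfDegree (i : ℕ) :
    homogeneousSubmodule σ R i = restrictSupport R (exponentsOfDegree σ i : Set (σ →₀ ℕ)) := by
  rw [homogeneousSubmodule_eq_finsupp_supported]
  congr 1
  ext d
  rw [mem_coe, mem_exponentsOfDegree]
  rfl

theorem restrictSupport_exponentsOfDegreeLT_succ_inf_ker (i : ℕ) :
    restrictSupport R (exponentsOfDegreeLT σ (i + 1) : Set (σ →₀ ℕ)) ⊓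
        LinearMap.ker (homogeneousComponent (σ := σ) (R := R) i) =
      restrictSupport R (exponentsOfDegreeLT σ i : Set (σ →₀ ℕ)) := by
  ext p
  simp only [Submodule.mem_inf, mem_restrictSupport_iff, LinearMap.mem_ker]
  constructor
  · rintro ⟨hp, hpi⟩ d hd
    refine mem_exponentsOfDegreeLT.2 <|
      (Nat.lt_succ_iff.1 (mem_exponentsOfDegreeLT.1 (hp hd))).lt_of_ne fun hdi => ?_
    have := congr_arg (coeff d) hpi
    rw [coeff_homogeneousComponent, if_pos hdi, coeff_zero] at this
    exact mem_support_iff.1 hd this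
  · intro hp
    refine ⟨hp.trans fun d hd =>
      mem_exponentsOfDegreeLT.2 ((mem_exponentsOfDegreeLT.1 hd).trans i.lt_succ_self), ?_⟩
    ext d
    rw [coeff_homogeneousComponent, coeff_zero]
    split_ifs with hdi
    · exact notMem_support_iff.1 fun hd => (mem_exponentsOfDegreeLT.1 (hp hd)).ne hdi
    · rfl

theorem finrank_map_homogeneousComponent_add_finrank {K : Type*} [Field K]
    (V : Submodule K (MvPolynomial σ K)) (i : ℕ) :
    finrank K ((V ⊓ restrictSupport K (exponentsOfDegreeLT σ (i + 1) : Set (σ →₀ ℕ))).map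
        (homogeneousComponent i)) +
      finrank K ↥(V ⊓ restrictSupport K (exponentsOfDegreeLT σ i : Set (σ →₀ ℕ))) =
      finrank K ↥(V ⊓ restrictSupport K (exponentsOfDegreeLT σ (i + 1) : Set (σ →₀ ℕ))) := by
  have : FiniteDimensional K
      ↥(V ⊓ restrictSupport K (exponentsOfDegreeLT σ (i + 1) : Set (σ →₀ ℕ))) :=
    Submodule.finiteDimensional_of_le inf_le_right
  have h := Submodule.finrank_map_add_finrank_inf_ker (homogeneousComponent i)
    (V ⊓ restrictSupport K (exponentsOfDegreeLT σ (i + 1) : Set (σ →₀ ℕ)))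
  rwa [inf_assoc, restrictSupport_exponentsOfDegreeLT_succ_inf_ker] at h

end DegreeFiltration

section Evaluation

variable {σ κ K : Type*} [Field K]

noncomputable def evalPoints (a : σ → κ → K) : MvPolynomial σ K →ₗ[K] κ → K :=
  LinearMap.pi fun j => (aeval fun i => a i j).toLinearMap

@[simp]
theorem evalPoints_apply (a : σ → κ → K) (p : MvPolynomial σ K) (j : κ) :
    evalPoints a p j = aeval (fun i => a i j) p :=
  rfl

theorem ker_evalPoints (a : σ → κ → K) :
    LinearMap.ker (evalPoints a) =
      (⨅ j, RingHom.ker (aeval fun i => a i j).toRingHom :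
        Ideal (MvPolynomial σ K)).restrictScalars K := by
  ext p
  simp only [LinearMap.mem_ker, Submodule.restrictScalars_mem, Submodule.mem_iInf,
    RingHom.mem_ker]
  exact _root_.funext_iff

variable [Fintype σ] {R : Type*} [CommRing R] [Nontrivial R] [Algebra R K] {a : σ → κ → K}

theorem linearIndependent_evalPoints_monomial
    (ha : AlgebraicIndependent R fun p : σ × κ => a p.1 p.2) {ι : Type*} [Fintype ι]
    [DecidableEq ι] {m : ι → σ →₀ ℕ} (hm : Injective m) {e : ι → κ} (he : Injective e) :
    LinearIndependent K fun s t => evalPoints a (monomial (m s) 1) (e t) := by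
  have hrows : (fun s t => evalPoints a (monomial (m s) 1) (e t)) =
      fun s => Matrix.of (fun s t => ∏ i, a i (e t) ^ m s i) s := by
    ext s t
    simp [aeval_monomial, Finsupp.prod_fintype]
  rw [hrows]
  exact Matrix.linearIndependent_rows_of_det_ne_zero (det_monomial_ne_zero ha hm he)

variable [Fintype κ]

theorem disjoint_ker_evalPoints_restrictSupport
    (ha : AlgebraicIndependent R fun p : σ × κ => a p.1 p.2) {S : Finset (σ →₀ ℕ)}
    (hS : #S ≤ Fintype.card κ) :
    Disjoint (LinearMap.ker (evalPoints a)) (restrictSupport K (S : Set (σ →₀ ℕ))) := by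
  classical
  obtain ⟨e⟩ := Function.Embedding.nonempty_of_card_le (α := S) (by simpa using hS)
  have hind := linearIndependent_evalPoints_monomial ha Subtype.val_injective e.injective
  have := Submodule.range_ker_disjoint (f := LinearMap.funLeft K K e ∘ₗ evalPoints a) hind
  rw [restrictSupport_eq_span, Set.image_eq_range]
  exact (this.mono_right (LinearMap.ker_le_ker_comp _ _)).symm

theorem map_evalPoints_restrictSupport_eq_top
    (ha : AlgebraicIndependent R fun p : σ × κ => a p.1 p.2) {S : Finset (σ →₀ ℕ)}
    (hS : Fintype.card κ ≤ #S) : (restrictSupport K (S : Set (σ →₀ ℕ))).map (evalPoints a) = ⊤ := by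
  classical
  obtain ⟨m⟩ := Function.Embedding.nonempty_of_card_le (β := S) (by simpa using hS)
  have hind := linearIndependent_evalPoints_monomial ha
    (Subtype.val_injective.comp m.injective) injective_id
  rw [eq_top_iff, ← hind.span_eq_top_of_card_eq_finrank' (by simp), Submodule.span_le]
  rintro _ ⟨t, rfl⟩
  exact ⟨_, (monomial_mem_restrictSupport K).2 (.inl (m t).2), rfl⟩

theorem finrank_ker_evalPoints_inf_restrictSupport
    (ha : AlgebraicIndependent R fun p : σ × κ => a p.1 p.2) (S : Finset (σ →₀ ℕ)) :
    finrank K ↥(LinearMap.ker (evalPoints a) ⊓ restrictSupport K (S : Set (σ →₀ ℕ))) =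
      #S - Fintype.card κ := by
  rcases le_total #S (Fintype.card κ) with hS | hS
  · rw [(disjoint_ker_evalPoints_restrictSupport ha hS).eq_bot, finrank_bot,
      Nat.sub_eq_zero_of_le hS]
  · have h := (restrictSupport K (S : Set (σ →₀ ℕ))).finrank_map_add_finrank_inf_ker
      (evalPoints a)
    rw [map_evalPoints_restrictSupport_eq_top ha hS, finrank_top, finrank_fintype_fun_eq_card,
      inf_comm, finrank_restrictSupport] at h
    omega

theorem card_filter_degree_add_of_degree_compatible [DecidableEq σ]
    (ha : AlgebraicIndependent R fun p : σ × κ => a p.1 p.2) {O : Finset (σ →₀ ℕ)} {i : ℕ}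
    (hO : #(O.filter (·.degree = i)) + finrank K ((LinearMap.ker (evalPoints a) ⊓
        restrictTotalDegree σ K i).map (homogeneousComponent i)) =
      finrank K (homogeneousSubmodule σ K i)) :
    #(O.filter (·.degree = i)) + (#(exponentsOfDegreeLT σ (i + 1)) - Fintype.card κ) =
      #(exponentsOfDegree σ i) + (#(exponentsOfDegreeLT σ i) - Fintype.card κ) := by
  have h := finrank_map_homogeneousComponent_add_finrank (LinearMap.ker (evalPoints a)) i
  rw [← restrictTotalDegree_eq_restrictSupport_exponentsOfDegreeLT,
    finrank_ker_evalPoints_inf_restrictSupport ha,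
    restrictTotalDegree_eq_restrictSupport_exponentsOfDegreeLT,
    finrank_ker_evalPoints_inf_restrictSupport ha] at h
  rw [homogeneousSubmodule_eq_restrictSupport_exponentsOfDegree, finrank_restrictSupport,
    restrictTotalDegree_eq_restrictSupport_exponentsOfDegreeLT] at hO
  omega

end Evaluation

section DegreeSlices

variable {σ : Type*} [Fintype σ] [DecidableEq σ] {O : Finset (σ →₀ ℕ)} {k i : ℕ}

theorem exponentsOfDegree_subset_of_card_lt
    (hcount : #(O.filter (·.degree = i)) + (#(exponentsOfDegreeLT σ (i + 1)) - k) =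
      #(exponentsOfDegree σ i) + (#(exponentsOfDegreeLT σ i) - k))
    (hk : #(exponentsOfDegreeLT σ (i + 1)) < k) : exponentsOfDegree σ i ⊆ O := by
  have hsub : O.filter (·.degree = i) ⊆ exponentsOfDegree σ i :=
    fun d hd => mem_exponentsOfDegree.2 (mem_filter.1 hd).2
  have := card_exponentsOfDegreeLT_succ (σ := σ) i
  have hO := eq_of_subset_of_card_le hsub (by omega)
  intro d hd
  rw [← hO] at hd
  exact (mem_filter.1 hd).1

theorem card_filter_degree_eq_sub
    (hcount : #(O.filter (·.degree = i)) + (#(exponentsOfDegreeLT σ (i + 1)) - k) =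
      #(exponentsOfDegree σ i) + (#(exponentsOfDegreeLT σ i) - k))
    (hk₁ : #(exponentsOfDegreeLT σ i) ≤ k) (hk₂ : k ≤ #(exponentsOfDegreeLT σ (i + 1))) :
    #(O.filter (·.degree = i)) = k - #(exponentsOfDegreeLT σ i) := by
  have := card_exponentsOfDegreeLT_succ (σ := σ) i
  omega

theorem degree_ne_of_le_card
    (hcount : #(O.filter (·.degree = i)) + (#(exponentsOfDegreeLT σ (i + 1)) - k) =
      #(exponentsOfDegree σ i) + (#(exponentsOfDegreeLT σ i) - k))
    (hk : k ≤ #(exponentsOfDegreeLT σ i)) {m : σ →₀ ℕ} (hm : m ∈ O) : m.degree ≠ i := by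
  intro hmi
  have : 0 < #(O.filter (·.degree = i)) := card_pos.2 ⟨m, mem_filter.2 ⟨hm, hmi⟩⟩
  have := card_exponentsOfDegreeLT_succ (σ := σ) i
  omega

end DegreeSlices

end MvPolynomial

theorem stmt_15_general (n k : ℕ) (hn : 0 < n)
    (a : Fin n → Fin k → ℝ)
    (halg : AlgebraicIndependent ℚ (fun p : Fin n × Fin k => a p.1 p.2))
    (I : Ideal (MvPolynomial (Fin n) ℝ))
    (hI : I = ⨅ j : Fin k,
      RingHom.ker ((aeval (fun i : Fin n => a i j)).toRingHom :
        MvPolynomial (Fin n) ℝ →+* ℝ))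
    (l : ℕ) (hl : k ≤ (n + l).choose l) (hlmin : ∀ l' : ℕ, l' < l → ¬ k ≤ (n + l').choose l')
    (W : ℕ → Submodule ℝ (MvPolynomial (Fin n) ℝ))
    (hW : ∀ i : ℕ, W i = Submodule.map (homogeneousComponent i)
      (I.restrictScalars ℝ ⊓ restrictTotalDegree (Fin n) ℝ i))
    (O : Finset (Fin n →₀ ℕ))
    (hOdc : ∀ i : ℕ,
      (O.filter (fun m => m.sum (fun _ e => e) = i)).card + Module.finrank ℝ (W i) =
        Module.finrank ℝ (homogeneousSubmodule (Fin n) ℝ i)) :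
    (∀ m : Fin n →₀ ℕ, m.sum (fun _ e => e) < l → m ∈ O) ∧
      (O.filter (fun m => m.sum (fun _ e => e) = l)).card = k - (n + l - 1).choose n ∧
      (∀ m ∈ O, m.sum (fun _ e => e) ≤ l) := by
  classical
  simp only [show ∀ m : Fin n →₀ ℕ, (m.sum fun _ e => e) = m.degree from fun _ => rfl] at hOdc ⊢
  have hker : I.restrictScalars ℝ = LinearMap.ker (evalPoints a) := by rw [hI, ker_evalPoints]
  have hcount (i : ℕ) := card_filter_degree_add_of_degree_compatible halg (hker ▸ hW i ▸ hOdc i)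
  simp only [Fintype.card_fin] at hcount
  have hlt (i : ℕ) (hi : i < l) : #(exponentsOfDegreeLT (Fin n) (i + 1)) < k := by
    simpa [card_exponentsOfDegreeLT_succ_eq_choose] using hlmin i hi
  have hle : k ≤ #(exponentsOfDegreeLT (Fin n) (l + 1)) := by
    simpa [card_exponentsOfDegreeLT_succ_eq_choose] using hl
  refine ⟨fun m hm => exponentsOfDegree_subset_of_card_lt (hcount _) (hlt _ hm)
    (mem_exponentsOfDegree.2 rfl), ?_, fun m hm => ?_⟩
  · have : Nonempty (Fin n) := ⟨⟨0, hn⟩⟩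
    have hchoose := card_exponentsOfDegreeLT_eq_choose (σ := Fin n) l
    rw [Fintype.card_fin] at hchoose
    rw [← hchoose]
    refine card_filter_degree_eq_sub (hcount l) ?_ hle
    cases l with
    | zero => simp [exponentsOfDegreeLT]
    | succ l => exact (hlt l l.lt_succ_self).le
  · by_contra! hgt
    exact degree_ne_of_le_card (hcount _) (hle.trans (card_exponentsOfDegreeLT_mono hgt)) hm rfl

/-- For the vanishing ideal `I` of `k` generic points in `n`-space and `l` the
smallest nonnegative integer with `k ≤ C(n+l, l)`, every degree-compatible
order ideal of `I` consists of all monomials of degree `< l` together with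
exactly `k − C(n+l−1, l−1)` monomials of degree `l` (the number of monomials of
degree `< l` being `C(n+l−1, l−1) = C(n+l−1, n)`). -/
theorem stmt_15 (n k : ℕ) (hn : 0 < n) (hk : 0 < k)
    (a : Fin n → Fin k → ℝ)
    (halg : AlgebraicIndependent ℚ (fun p : Fin n × Fin k => a p.1 p.2))
    (I : Ideal (MvPolynomial (Fin n) ℝ))
    (hI : I = ⨅ j : Fin k,
      RingHom.ker ((aeval (fun i : Fin n => a i j)).toRingHom :
        MvPolynomial (Fin n) ℝ →+* ℝ))
    (l : ℕ) (hl : k ≤ (n + l).choose l) (hlmin : ∀ l' : ℕ, l' < l → ¬ k ≤ (n + l').choose l')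
    (W : ℕ → Submodule ℝ (MvPolynomial (Fin n) ℝ))
    (hW : ∀ i : ℕ, W i = Submodule.map (homogeneousComponent i)
      (I.restrictScalars ℝ ⊓ restrictTotalDegree (Fin n) ℝ i))
    (O : Finset (Fin n →₀ ℕ))
    (hOideal : ∀ t ∈ O, ∀ t' : Fin n →₀ ℕ, (∀ i, t' i ≤ t i) → t' ∈ O)
    (hOdc : ∀ i : ℕ,
      (O.filter (fun m => m.sum (fun _ e => e) = i)).card + Module.finrank ℝ (W i) =
        Module.finrank ℝ (homogeneousSubmodule (Fin n) ℝ i)) :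
    (∀ m : Fin n →₀ ℕ, m.sum (fun _ e => e) < l → m ∈ O) ∧
      (O.filter (fun m => m.sum (fun _ e => e) = l)).card = k - (n + l - 1).choose n ∧
      (∀ m ∈ O, m.sum (fun _ e => e) ≤ l) :=
  stmt_15_general n k hn a halg I hI l hl hlmin W hW O hOdc
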